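/- Define f(x) = Φ(x − z_{2α}) − Φ(x − z_α). Then f(x) ≥ α for all x with 0 ≤ x ≤ z_{2α} + z_α. -/

import Mathlib

open Real MeasureTheory Set

/-- Standard normal probability density function. -/
noncomputable def stdPhi (x : ℝ) : ℝ := (Real.sqrt (2 * Real.pi))⁻¹ * Real.exp (-x ^ 2 / 2)

/-- Standard normal cumulative distribution function. -/
noncomputable def stdPhiCDF (x : ℝ) : ℝ := ∫ t in Set.Iic x, stdPhi t

/-!
Write `g x = Φ(x - z_{2α}) - Φ(x - z_α)`, the standard normal mass of `[x - z_α, x - z_{2α}]`.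
Since `Φ(-t) = 1 - Φ(t)`, `g` is symmetric about the midpoint `m = (z_{2α} + z_α) / 2` and takes
the value `2α - α = α` at both `0` and `2m`. Its derivative `φ(x - z_{2α}) - φ(x - z_α)` is
nonnegative left of `m`, because there `x - z_{2α}` is the point closer to the mode `0` of `φ`.
So `g` increases on `[0, m]` and, by symmetry, decreases on `[m, 2m]`, staying above `α`.
-/

lemma stdPhi_eq_gaussianPDFReal : stdPhi = ProbabilityTheory.gaussianPDFReal 0 1 := by
  ext x
  simp [stdPhi, ProbabilityTheory.gaussianPDFReal, neg_div]

lemma continuous_stdPhi : Continuous stdPhi := by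
  unfold stdPhi
  fun_prop

lemma integrable_stdPhi : Integrable stdPhi :=
  stdPhi_eq_gaussianPDFReal ▸ ProbabilityTheory.integrable_gaussianPDFReal 0 1

lemma integral_stdPhi : ∫ x, stdPhi x = 1 :=
  stdPhi_eq_gaussianPDFReal ▸ ProbabilityTheory.integral_gaussianPDFReal_eq_one 0 one_ne_zero

lemma stdPhi_neg (x : ℝ) : stdPhi (-x) = stdPhi x := by
  simp [stdPhi]

lemma stdPhi_le_stdPhi_of_sq_le {u v : ℝ} (h : u ^ 2 ≤ v ^ 2) : stdPhi v ≤ stdPhi u := by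
  unfold stdPhi
  gcongr

lemma stdPhiCDF_sub_stdPhiCDF (a b : ℝ) : stdPhiCDF b - stdPhiCDF a = ∫ t in a..b, stdPhi t :=
  intervalIntegral.integral_Iic_sub_Iic integrable_stdPhi.integrableOn
    integrable_stdPhi.integrableOn

lemma monotone_stdPhiCDF : Monotone stdPhiCDF := fun a b hab => by
  have : 0 ≤ ∫ t in a..b, stdPhi t :=
    intervalIntegral.integral_nonneg hab fun t _ => by unfold stdPhi; positivity
  linarith [stdPhiCDF_sub_stdPhiCDF a b]

lemma stdPhiCDF_neg (x : ℝ) : stdPhiCDF (-x) = 1 - stdPhiCDF x := by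
  have h_reflect : stdPhiCDF (-x) = ∫ t in Ioi x, stdPhi t := by
    rw [stdPhiCDF, ← neg_neg x, ← integral_comp_neg_Iic, neg_neg]
    simp only [stdPhi_neg]
  have h_split : stdPhiCDF x + ∫ t in Ioi x, stdPhi t = 1 := by
    rw [stdPhiCDF, ← compl_Iic, integral_add_compl measurableSet_Iic integrable_stdPhi,
      integral_stdPhi]
  linarith

lemma hasDerivAt_stdPhiCDF (x : ℝ) : HasDerivAt stdPhiCDF (stdPhi x) x := by
  have h_eq : stdPhiCDF = fun u => stdPhiCDF 0 + ∫ t in (0 : ℝ)..u, stdPhi t := by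
    funext u
    rw [← stdPhiCDF_sub_stdPhiCDF]
    ring
  rw [h_eq]
  exact ((continuous_stdPhi.integral_hasStrictDerivAt 0 x).hasDerivAt).const_add _

noncomputable def windowMass (a b x : ℝ) : ℝ := stdPhiCDF (x - a) - stdPhiCDF (x - b)

lemma windowMass_add_sub (a b x : ℝ) : windowMass a b (a + b - x) = windowMass a b x := by
  simp only [windowMass, show a + b - x - a = -(x - b) by ring,
    show a + b - x - b = -(x - a) by ring, stdPhiCDF_neg]
  ring

lemma hasDerivAt_windowMass (a b x : ℝ) :
    HasDerivAt (windowMass a b) (stdPhi (x - a) - stdPhi (x - b)) x :=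
  ((hasDerivAt_stdPhiCDF _).comp_sub_const x a).sub ((hasDerivAt_stdPhiCDF _).comp_sub_const x b)

lemma monotoneOn_windowMass {a b : ℝ} (hab : a ≤ b) :
    MonotoneOn (windowMass a b) (Iic ((a + b) / 2)) := by
  have h_diff : Differentiable ℝ (windowMass a b) := fun x =>
    (hasDerivAt_windowMass a b x).differentiableAt
  refine monotoneOn_of_deriv_nonneg (convex_Iic _) h_diff.continuous.continuousOn
    (h_diff.differentiableOn.mono interior_subset) (fun x hx => ?_)
  rw [interior_Iic, mem_Iio] at hx
  have h_closer : (x - a) ^ 2 ≤ (x - b) ^ 2 := by nlinarith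
  rw [(hasDerivAt_windowMass a b x).deriv, sub_nonneg]
  exact stdPhi_le_stdPhi_of_sq_le h_closer

lemma windowMass_zero_le {a b x : ℝ} (hab : a ≤ b) (hx₀ : 0 ≤ x) (hx₁ : x ≤ a + b) :
    windowMass a b 0 ≤ windowMass a b x := by
  rcases le_total x ((a + b) / 2) with hx | hx
  · exact monotoneOn_windowMass hab (by simp only [mem_Iic]; linarith) hx hx₀
  · rw [← windowMass_add_sub a b x]
    exact monotoneOn_windowMass hab (by simp only [mem_Iic]; linarith)
      (by simp only [mem_Iic]; linarith) (by linarith)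

theorem f_lower_bound_general
    (α : ℝ) (hα0 : 0 < α)
    (za zb : ℝ) (hza : 1 - stdPhiCDF za = α) (hzb : 1 - stdPhiCDF zb = 2 * α)
    (f : ℝ → ℝ) (hf : ∀ x, f x = stdPhiCDF (x - zb) - stdPhiCDF (x - za)) :
    ∀ x, 0 ≤ x → x ≤ zb + za → f x ≥ α := by
  intro x hx₀ hx₁
  have hzb_le : zb ≤ za := by
    by_contra! h
    linarith [monotone_stdPhiCDF h.le]
  have h_zero : windowMass zb za 0 = α := by
    simp only [windowMass, zero_sub, stdPhiCDF_neg]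
    linarith
  rw [hf, ge_iff_le, ← h_zero]
  exact windowMass_zero_le hzb_le hx₀ hx₁

theorem f_lower_bound
    (α : ℝ) (hα0 : 0 < α) (hα1 : α < 1 / 2)
    (za zb : ℝ) (hza : 1 - stdPhiCDF za = α) (hzb : 1 - stdPhiCDF zb = 2 * α)
    (f : ℝ → ℝ) (hf : ∀ x, f x = stdPhiCDF (x - zb) - stdPhiCDF (x - za)) :
    ∀ x, 0 ≤ x → x ≤ zb + za → f x ≥ α :=
  f_lower_bound_general α hα0 za zb hza hzb f hf
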